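/- arXiv:2511.20898 — 5 statements merged into one kernel-verified Lean document; each statement's English description precedes it below -/
import Mathlib

section
/- Let φ : [0,∞) → [0,∞) satisfy (aInc)_1 with constant L, i.e. t ↦ φ(t)/t is almost increasing on (0,∞) with constant L. Then for any finite sequence of nonnegative reals t_1,…,t_N and nonnegative weights λ_1,…,λ_N with Σ λ_k = 1, we have φ(c Σ λ_k t_k) ≤ Σ λ_k φ(t_k), where c > 0 is a constant depending only on L (one may take c = 1/(2L)). -/
/-!
Let `S = ∑ λₖ tₖ`. The indices with `tₖ < S/2` carry at most half of `S`, so those with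
`tₖ ≥ S/2` carry at least `S/2`. For each of these, `(aInc)₁` compares `φ(S/(2L))/(S/(2L))`
with `L φ(tₖ)/tₖ`; summing with weights `λₖ tₖ` gives `φ(S/(2L)) · S/2 ≤ S/2 · ∑ λₖ φ(tₖ)`.
-/

open Finset

lemma sub_le_sum_filter_le {ι : Type*} (s : Finset ι) (w x : ι → ℝ) {a : ℝ} (ha : 0 ≤ a)
    (hw : ∀ i ∈ s, 0 ≤ w i) (hw1 : ∑ i ∈ s, w i ≤ 1) :
    ∑ i ∈ s, w i * x i - a ≤ ∑ i ∈ s with a ≤ x i, w i * x i := by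
  have hsmall : ∑ i ∈ s with ¬ a ≤ x i, w i * x i ≤ a :=
    calc ∑ i ∈ s with ¬ a ≤ x i, w i * x i
        ≤ ∑ i ∈ s with ¬ a ≤ x i, w i * a := by
          refine sum_le_sum fun i hi => ?_
          rw [mem_filter] at hi
          exact mul_le_mul_of_nonneg_left (not_le.1 hi.2).le (hw i hi.1)
      _ = (∑ i ∈ s with ¬ a ≤ x i, w i) * a := by rw [sum_mul]
      _ ≤ 1 * a := by
          gcongr
          exact (sum_le_sum_of_subset_of_nonneg (filter_subset _ _)
            fun i hi _ => hw i hi).trans hw1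
      _ = a := one_mul a
  linarith [sum_filter_add_sum_filter_not s (fun i => a ≤ x i) (fun i => w i * x i)]

lemma apply_mul_le_mul_mul_of_aInc {φ : ℝ → ℝ} {L : ℝ}
    (hainc : ∀ s t : ℝ, 0 < s → s ≤ t → φ s / s ≤ L * (φ t / t))
    {r t : ℝ} (hr : 0 < r) (hrt : r ≤ t) : φ r * t ≤ L * r * φ t := by
  have h := hainc r t hr hrt
  rw [div_le_iff₀ hr] at h
  have ht : 0 < t := hr.trans_le hrt
  calc φ r * t ≤ L * (φ t / t) * r * t := by gcongr
    _ = L * r * φ t := by field_simp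

lemma apply_mul_le_mul_sum_of_aInc {ι : Type*} (s : Finset ι) {φ : ℝ → ℝ} {L : ℝ}
    (hL : 0 ≤ L) (hainc : ∀ s t : ℝ, 0 < s → s ≤ t → φ s / s ≤ L * (φ t / t))
    (w x : ι → ℝ) (hw : ∀ i ∈ s, 0 ≤ w i) (hφx : ∀ i ∈ s, 0 ≤ φ (x i))
    {r a : ℝ} (hr : 0 < r) (hra : r ≤ a) (hφr : 0 ≤ φ r)
    (ha : a ≤ ∑ i ∈ s with a ≤ x i, w i * x i) :
    φ r * a ≤ L * r * ∑ i ∈ s, w i * φ (x i) :=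
  calc φ r * a ≤ φ r * ∑ i ∈ s with a ≤ x i, w i * x i := by gcongr
    _ = ∑ i ∈ s with a ≤ x i, w i * (φ r * x i) := by
        rw [mul_sum]; exact sum_congr rfl fun i _ => by ring
    _ ≤ ∑ i ∈ s with a ≤ x i, w i * (L * r * φ (x i)) := by
        refine sum_le_sum fun i hi => ?_
        rw [mem_filter] at hi
        exact mul_le_mul_of_nonneg_left
          (apply_mul_le_mul_mul_of_aInc hainc hr (hra.trans hi.2)) (hw i hi.1)
    _ = L * r * ∑ i ∈ s with a ≤ x i, w i * φ (x i) := by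
        rw [mul_sum]; exact sum_congr rfl fun i _ => by ring
    _ ≤ L * r * ∑ i ∈ s, w i * φ (x i) :=
        mul_le_mul_of_nonneg_left (sum_le_sum_of_subset_of_nonneg (filter_subset _ s)
          fun i hi _ => mul_nonneg (hw i hi) (hφx i hi)) (mul_nonneg hL hr.le)

/-- Discrete Jensen-type inequality for functions satisfying (aInc)₁ with constant L. -/
theorem stmt_2 (φ : ℝ → ℝ) (L : ℝ) (hL : 1 ≤ L)
    (hφ0 : φ 0 = 0) (hmono : MonotoneOn φ (Set.Ici 0))
    (hainc : ∀ s t : ℝ, 0 < s → s ≤ t → φ s / s ≤ L * (φ t / t))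
    (N : ℕ) (t lam : Fin N → ℝ)
    (ht : ∀ k, 0 ≤ t k) (hlam : ∀ k, 0 ≤ lam k)
    (hsum : ∑ k, lam k = 1) :
    φ ((1 / (2 * L)) * ∑ k, lam k * t k) ≤ ∑ k, lam k * φ (t k) := by
  have hL0 : 0 < L := by linarith
  have hφ_nonneg : ∀ x, 0 ≤ x → 0 ≤ φ x := fun x hx =>
    hφ0 ▸ hmono Set.self_mem_Ici hx hx
  have hrhs : 0 ≤ ∑ k, lam k * φ (t k) :=
    sum_nonneg fun k _ => mul_nonneg (hlam k) (hφ_nonneg _ (ht k))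
  set S := ∑ k, lam k * t k
  have hS0 : 0 ≤ S := sum_nonneg fun k _ => mul_nonneg (hlam k) (ht k)
  rcases hS0.eq_or_lt with hS | hS
  · rwa [← hS, mul_zero, hφ0]
  have hr : 0 < 1 / (2 * L) * S := by positivity
  have hra : 1 / (2 * L) * S ≤ S / 2 := by
    rw [div_mul_eq_mul_div, one_mul]
    exact div_le_div_of_nonneg_left hS.le two_pos (by linarith)
  have hmass : S / 2 ≤ ∑ k with S / 2 ≤ t k, lam k * t k := by
    have := sub_le_sum_filter_le univ lam t (a := S / 2) (by positivity)
      (fun k _ => hlam k) hsum.le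
    linarith
  have key := apply_mul_le_mul_sum_of_aInc univ hL0.le hainc lam t (fun k _ => hlam k)
    (fun k _ => hφ_nonneg _ (ht k)) hr hra (hφ_nonneg _ hr.le) hmass
  rw [show L * (1 / (2 * L) * S) = S / 2 by field_simp, mul_comm (S / 2)] at key
  exact le_of_mul_le_mul_right key (by positivity)
end

section
/- Let Ω ⊂ ℝ^n be a bounded open set, 1 < p < ∞, and ω ∈ A_p. Let φ be a weak Φ-function on Ω satisfying (A0) with constant β_0 and (aInc)_p. Then every f in the weighted generalized Orlicz space L^ψ(Ω), where ψ(x,t) = φ(x,t)ω(x), belongs to L^1_loc(Ω). -/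
/-!
By (A0), `φ(x, c) ≥ 1` for a fixed `c > 1/β₀`, and then (aInc)_p gives the pointwise bound
`t^p ≤ c^p (1 + L φ(x, t))`. Hence a function with finite `ψ`-modular lies in `L^p(B, ω dx)` on
every ball `B`, since `ω` is integrable on balls by the `A_p` condition. Hölder's inequality,
`∫_B |f| ≤ (∫_B |f|^p ω)^{1/p} (∫_B ω^{-1/(p-1)})^{(p-1)/p}`, together with local integrability
of the dual weight `ω^{-1/(p-1)}` (again `A_p`), then shows `f ∈ L¹(B)`.
-/

open MeasureTheory Metric ENNReal Filter Set

/-- Left-continuous generalized inverse of a Φ-function. -/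
noncomputable def phiInv {α : Type*} (φ : α → ℝ → ℝ) (x : α) (s : ℝ) : ℝ :=
  sInf {τ : ℝ | 0 ≤ τ ∧ s ≤ φ x τ}

theorem le_apply_of_phiInv_lt {α : Type*} {φ : α → ℝ → ℝ} {x : α} {s c : ℝ}
    (hmono : MonotoneOn (φ x) (Ici 0)) (htop : Tendsto (φ x) atTop atTop)
    (h : phiInv φ x s < c) : s ≤ φ x c := by
  have hne : {τ : ℝ | 0 ≤ τ ∧ s ≤ φ x τ}.Nonempty :=
    ((eventually_ge_atTop 0).and (htop.eventually_ge_atTop s)).exists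
  obtain ⟨τ, ⟨hτ, hsτ⟩, hτc⟩ := exists_lt_of_csInf_lt hne h
  exact hsτ.trans (hmono hτ (mem_Ici.2 (hτ.trans hτc.le)) hτc.le)

theorem rpow_le_mul_one_add_of_aInc {g : ℝ → ℝ} {p L c t : ℝ} (hp : 0 ≤ p) (hL : 0 ≤ L)
    (hc : 0 < c) (hgc : 1 ≤ g c) (hinc : ∀ s t, 0 < s → s ≤ t → g s / s ^ p ≤ L * (g t / t ^ p))
    (ht : 0 ≤ t) (hgt : 0 ≤ g t) : t ^ p ≤ c ^ p * (1 + L * g t) := by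
  have hcp : 0 < c ^ p := Real.rpow_pos_of_pos hc p
  rcases le_or_gt t c with htc | hct
  · calc t ^ p ≤ c ^ p := Real.rpow_le_rpow ht htc hp
      _ ≤ c ^ p * (1 + L * g t) :=
        le_mul_of_one_le_right hcp.le (le_add_of_nonneg_right (mul_nonneg hL hgt))
  · have hinv : 1 / c ^ p ≤ L * g t / t ^ p := by
      rw [mul_div_assoc]
      exact (div_le_div_of_nonneg_right hgc hcp.le).trans (hinc c t hc hct.le)
    rw [div_le_div_iff₀ hcp (Real.rpow_pos_of_pos (hc.trans hct) p)] at hinv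
    nlinarith

theorem ne_top_of_div_mul_div_rpow_le {a b V A : ℝ≥0∞} {q : ℝ} (hq : 0 < q) (ha : a ≠ 0)
    (hb : b ≠ 0) (hV : V ≠ ∞) (h : a / V * (b / V) ^ q ≤ A) (hA : A ≠ ∞) : a ≠ ∞ ∧ b ≠ ∞ := by
  have ha' : a / V ≠ 0 := by simp [ENNReal.div_eq_zero_iff, ha, hV]
  have hb' : (b / V) ^ q ≠ 0 := by
    simp [ENNReal.rpow_eq_zero_iff, ENNReal.div_eq_zero_iff, hb, hV, hq.not_gt]
  obtain ⟨haV, hbV⟩ : a / V ≠ ∞ ∧ (b / V) ^ q ≠ ∞ := by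
    have := ne_top_of_le_ne_top hA h
    rw [Ne, ENNReal.mul_eq_top] at this
    tauto
  constructor
  · rintro rfl
    exact haV (top_div_of_ne_top hV)
  · rintro rfl
    exact hbV (by rw [top_div_of_ne_top hV, top_rpow_of_pos hq])

section Weighted

variable {α : Type*} [MeasurableSpace α] {μ : Measure α}

theorem lintegral_enorm_rpow_mul_le_of_aInc {φ : α → ℝ → ℝ} {f ω : α → ℝ} {p L c lam : ℝ}
    (hp : 0 ≤ p) (hL : 0 ≤ L) (hc : 0 < c) (hlam : 0 < lam) (hω : Measurable ω)
    (h : ∀ᵐ x ∂μ, 0 ≤ ω x ∧ 1 ≤ φ x c ∧ (∀ t, 0 ≤ t → 0 ≤ φ x t) ∧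
      ∀ s t, 0 < s → s ≤ t → φ x s / s ^ p ≤ L * (φ x t / t ^ p)) :
    ∫⁻ x, ‖f x‖ₑ ^ p * ENNReal.ofReal (ω x) ∂μ ≤ ENNReal.ofReal ((lam * c) ^ p) *
      (∫⁻ x, ENNReal.ofReal (ω x) ∂μ +
        ENNReal.ofReal L * ∫⁻ x, ENNReal.ofReal (φ x (|f x| / lam) * ω x) ∂μ) := by
  have hpt : ∀ᵐ x ∂μ, ‖f x‖ₑ ^ p * ENNReal.ofReal (ω x) ≤ ENNReal.ofReal ((lam * c) ^ p) *
      (ENNReal.ofReal (ω x) + ENNReal.ofReal L * ENNReal.ofReal (φ x (|f x| / lam) * ω x)) := by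
    filter_upwards [h] with x ⟨hωx, hφc, hφnn, hinc⟩
    set t := |f x| / lam
    have ht : 0 ≤ t := by positivity
    have hft : |f x| = lam * t := (mul_div_cancel₀ _ hlam.ne').symm
    have hreal : |f x| ^ p * ω x ≤ (lam * c) ^ p * (ω x + L * (φ x t * ω x)) :=
      calc |f x| ^ p * ω x = lam ^ p * t ^ p * ω x := by rw [hft, Real.mul_rpow hlam.le ht]
        _ ≤ lam ^ p * (c ^ p * (1 + L * φ x t)) * ω x := by
          gcongr
          exact rpow_le_mul_one_add_of_aInc hp hL hc hφc hinc ht (hφnn t ht)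
        _ = (lam * c) ^ p * (ω x + L * (φ x t * ω x)) := by
          rw [Real.mul_rpow hlam.le hc.le]; ring
    rw [Real.enorm_eq_ofReal_abs, ENNReal.ofReal_rpow_of_nonneg (abs_nonneg _) hp,
      ← ENNReal.ofReal_mul (by positivity), ← ENNReal.ofReal_mul hL,
      ← ENNReal.ofReal_add hωx (mul_nonneg hL (mul_nonneg (hφnn t ht) hωx)),
      ← ENNReal.ofReal_mul (by positivity)]
    exact ENNReal.ofReal_le_ofReal hreal
  calc _ ≤ _ := lintegral_mono_ae hpt
    _ = _ := by
      rw [lintegral_const_mul' _ _ ofReal_ne_top, lintegral_add_left hω.ennreal_ofReal,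
        lintegral_const_mul' _ _ ofReal_ne_top]

theorem lintegral_le_lintegral_rpow_mul_weight {F W : α → ℝ≥0∞} {p : ℝ} (hp : 1 < p)
    (hF : AEMeasurable F μ) (hW : AEMeasurable W μ) (hW0 : ∀ᵐ x ∂μ, W x ≠ 0)
    (hWtop : ∀ᵐ x ∂μ, W x ≠ ∞) :
    ∫⁻ x, F x ∂μ ≤
      (∫⁻ x, F x ^ p * W x ∂μ) ^ (1 / p) * (∫⁻ x, W x ^ (-1 / (p - 1)) ∂μ) ^ ((p - 1) / p) := by
  have hp0 : 0 < p := zero_lt_one.trans hp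
  have hp1 : p - 1 ≠ 0 := (sub_pos.2 hp).ne'
  have hpq := Real.HolderConjugate.conjExponent hp
  calc ∫⁻ x, F x ∂μ = ∫⁻ x, ((fun x ↦ F x * W x ^ (1 / p)) * fun x ↦ W x ^ (-1 / p)) x ∂μ := by
        refine lintegral_congr_ae ?_
        filter_upwards [hW0, hWtop] with x h0 htop
        rw [Pi.mul_apply, mul_assoc, ← ENNReal.rpow_add _ _ h0 htop, neg_div, add_neg_cancel,
          ENNReal.rpow_zero, mul_one]
    _ ≤ _ := ENNReal.lintegral_mul_le_Lp_mul_Lq μ hpq (hF.mul (hW.pow_const _)) (hW.pow_const _)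
    _ = _ := by
      congr 2
      · congr 1; ext x
        rw [ENNReal.mul_rpow_of_nonneg _ _ hp0.le, ← ENNReal.rpow_mul,
          one_div_mul_cancel hp0.ne', ENNReal.rpow_one]
      · congr 1; ext x
        rw [← ENNReal.rpow_mul, Real.conjExponent]
        congr 1
        field_simp
      · rw [Real.conjExponent, one_div_div]

theorem integrable_of_lintegral_rpow_mul_weight_ne_top {f ω : α → ℝ} {p : ℝ} (hp : 1 < p)
    (hf : AEStronglyMeasurable f μ) (hω : AEMeasurable ω μ) (hωpos : ∀ᵐ x ∂μ, 0 < ω x)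
    (hfω : ∫⁻ x, ‖f x‖ₑ ^ p * ENNReal.ofReal (ω x) ∂μ ≠ ∞)
    (hσ : ∫⁻ x, ENNReal.ofReal (ω x ^ (-1 / (p - 1))) ∂μ ≠ ∞) : Integrable f μ := by
  have hσ' : ∫⁻ x, ENNReal.ofReal (ω x) ^ (-1 / (p - 1)) ∂μ =
      ∫⁻ x, ENNReal.ofReal (ω x ^ (-1 / (p - 1))) ∂μ :=
    lintegral_congr_ae (hωpos.mono fun x hx ↦ ENNReal.ofReal_rpow_of_pos hx)
  refine ⟨hf, ?_⟩
  calc ∫⁻ x, ‖f x‖ₑ ∂μ ≤ _ :=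
        lintegral_le_lintegral_rpow_mul_weight hp hf.enorm hω.ennreal_ofReal
          (hωpos.mono fun x hx ↦ (ENNReal.ofReal_pos.2 hx).ne') (ae_of_all _ fun _ ↦ ofReal_ne_top)
    _ < ∞ := by
      rw [hσ']
      exact mul_lt_top (rpow_lt_top_of_nonneg (by positivity) hfω)
        (rpow_lt_top_of_nonneg (div_nonneg (sub_pos.2 hp).le (by positivity)) hσ)

theorem lintegral_ofReal_ne_zero [NeZero μ] {g : α → ℝ} (hg : AEMeasurable g μ)
    (hpos : ∀ᵐ x ∂μ, 0 < g x) :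
    ∫⁻ x, ENNReal.ofReal (g x) ∂μ ≠ 0 := by
  rw [Ne, lintegral_eq_zero_iff' hg.ennreal_ofReal]
  intro h
  obtain ⟨x, hx0, hxpos⟩ := (h.and hpos).exists
  exact (ENNReal.ofReal_pos.2 hxpos).ne' hx0

theorem setLIntegral_ne_top_of_Ap {s : Set α} {ω : α → ℝ} {p : ℝ} {A : ℝ≥0∞} (hp : 1 < p)
    (hs0 : μ s ≠ 0) (hs : μ s ≠ ∞)
    (hω : Measurable ω) (hωpos : ∀ᵐ x ∂μ.restrict s, 0 < ω x)
    (hAp : (∫⁻ y in s, ENNReal.ofReal (ω y) ∂μ) / μ s *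
      ((∫⁻ y in s, ENNReal.ofReal (ω y ^ (-1 / (p - 1))) ∂μ) / μ s) ^ (p - 1) ≤ A)
    (hA : A ≠ ∞) :
    ∫⁻ y in s, ENNReal.ofReal (ω y) ∂μ ≠ ∞ ∧
      ∫⁻ y in s, ENNReal.ofReal (ω y ^ (-1 / (p - 1))) ∂μ ≠ ∞ := by
  have : NeZero (μ.restrict s) := ⟨by rwa [Ne, Measure.restrict_eq_zero]⟩
  exact ne_top_of_div_mul_div_rpow_le (sub_pos.2 hp)
    (lintegral_ofReal_ne_zero hω.aemeasurable hωpos)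
    (lintegral_ofReal_ne_zero (hω.pow_const _).aemeasurable
      (hωpos.mono fun x hx ↦ Real.rpow_pos_of_pos hx _))
    hs hAp hA

end Weighted

theorem stmt_7_general (n : ℕ) (p L : ℝ) (hp : 1 < p) (hL : 1 ≤ L)
    (Ω : Set (EuclideanSpace ℝ (Fin n))) (hΩo : IsOpen Ω)
    (φ : EuclideanSpace ℝ (Fin n) → ℝ → ℝ)
    (hφnonneg : ∀ x ∈ Ω, ∀ t : ℝ, 0 ≤ t → 0 ≤ φ x t)
    (hφmono : ∀ x ∈ Ω, MonotoneOn (φ x) (Set.Ici 0))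
    (hφtop : ∀ x ∈ Ω, Tendsto (φ x) atTop atTop)
    (haincp : ∀ x ∈ Ω, ∀ s t : ℝ, 0 < s → s ≤ t →
      φ x s / s ^ p ≤ L * (φ x t / t ^ p))
    (β₀ : ℝ) (hβ₀ : 0 < β₀ ∧ β₀ ≤ 1)
    (hA0 : ∀ᵐ x ∂(volume.restrict Ω), β₀ ≤ phiInv φ x 1 ∧ phiInv φ x 1 ≤ 1 / β₀)
    (ω : EuclideanSpace ℝ (Fin n) → ℝ) (hωmeas : Measurable ω)
    (hωpos : ∀ᵐ x ∂volume, 0 < ω x)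
    (A : ℝ≥0∞) (hA : A ≠ ∞)
    (hAp : ∀ (z : EuclideanSpace ℝ (Fin n)) (r : ℝ), 0 < r →
      ((∫⁻ y in ball z r, ENNReal.ofReal (ω y)) / volume (ball z r)) *
        ((∫⁻ y in ball z r, ENNReal.ofReal (ω y ^ (-(1 : ℝ) / (p - 1)))) /
          volume (ball z r)) ^ (p - 1) ≤ A)
    (f : EuclideanSpace ℝ (Fin n) → ℝ) (hf : Measurable f)
    (hfψ : ∃ lam : ℝ, 0 < lam ∧
      ∫⁻ x in Ω, ENNReal.ofReal (φ x (|f x| / lam) * ω x) ≤ 1) :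
    LocallyIntegrableOn f Ω volume := by
  obtain ⟨lam, hlam, hmodular⟩ := hfψ
  obtain ⟨c, hc, hβ₀c⟩ : ∃ c, 0 < c ∧ 1 / β₀ < c :=
    ⟨1 / β₀ + 1, add_pos (one_div_pos.2 hβ₀.1) one_pos, lt_add_one _⟩
  intro x₀ hx₀
  obtain ⟨r, hr, hBΩ⟩ := Metric.isOpen_iff.mp hΩo x₀ hx₀
  refine ⟨ball x₀ r, mem_nhdsWithin_of_mem_nhds (ball_mem_nhds x₀ hr), ?_⟩
  have hωB : ∀ᵐ x ∂volume.restrict (ball x₀ r), 0 < ω x := ae_restrict_of_ae hωpos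
  obtain ⟨hω_fin, hσ_fin⟩ := setLIntegral_ne_top_of_Ap hp (measure_ball_pos volume x₀ hr).ne'
    measure_ball_lt_top.ne hωmeas hωB (hAp x₀ r hr) hA
  have hφB : ∀ᵐ x ∂volume.restrict (ball x₀ r), 0 ≤ ω x ∧ 1 ≤ φ x c ∧
      (∀ t, 0 ≤ t → 0 ≤ φ x t) ∧
      ∀ s t, 0 < s → s ≤ t → φ x s / s ^ p ≤ L * (φ x t / t ^ p) := by
    filter_upwards [ae_restrict_mem measurableSet_ball,
      ae_restrict_of_ae_restrict_of_subset hBΩ hA0, hωB] with x hx hA0x hωx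
    exact ⟨hωx.le, le_apply_of_phiInv_lt (hφmono x (hBΩ hx)) (hφtop x (hBΩ hx))
      (hA0x.2.trans_lt hβ₀c), hφnonneg x (hBΩ hx), haincp x (hBΩ hx)⟩
  have hmodularB : ∫⁻ x in ball x₀ r, ENNReal.ofReal (φ x (|f x| / lam) * ω x) ≠ ∞ :=
    ne_top_of_le_ne_top one_ne_top ((lintegral_mono_set hBΩ).trans hmodular)
  have hweighted : ∫⁻ x in ball x₀ r, ‖f x‖ₑ ^ p * ENNReal.ofReal (ω x) ≠ ∞ :=
    ne_top_of_le_ne_top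
      (mul_ne_top ofReal_ne_top (add_ne_top.2 ⟨hω_fin, mul_ne_top ofReal_ne_top hmodularB⟩))
      (lintegral_enorm_rpow_mul_le_of_aInc (zero_lt_one.trans hp).le (zero_le_one.trans hL) hc
        hlam hωmeas hφB)
  exact integrable_of_lintegral_rpow_mul_weight_ne_top hp hf.aestronglyMeasurable
    hωmeas.aemeasurable hωB hweighted hσ_fin

/-- If `ω ∈ A_p` and `φ` is a weak Φ-function satisfying (A0) and (aInc)_p, then every
member of the weighted generalized Orlicz space `L^ψ(Ω)`, `ψ(x,t) = φ(x,t)ω(x)`, is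
locally integrable on `Ω`. -/
theorem stmt_7 (n : ℕ) (p L : ℝ) (hp : 1 < p) (hL : 1 ≤ L)
    (Ω : Set (EuclideanSpace ℝ (Fin n))) (hΩo : IsOpen Ω) (hΩb : Bornology.IsBounded Ω)
    (φ : EuclideanSpace ℝ (Fin n) → ℝ → ℝ)
    (hφmeas : Measurable (Function.uncurry φ))
    (hφnonneg : ∀ x ∈ Ω, ∀ t : ℝ, 0 ≤ t → 0 ≤ φ x t)
    (hφmono : ∀ x ∈ Ω, MonotoneOn (φ x) (Set.Ici 0))
    (hφ0 : ∀ x ∈ Ω, φ x 0 = 0)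
    (hφ0' : ∀ x ∈ Ω, Tendsto (φ x) (nhdsWithin 0 (Set.Ioi 0)) (nhds 0))
    (hφtop : ∀ x ∈ Ω, Tendsto (φ x) atTop atTop)
    (hainc1 : ∀ x ∈ Ω, ∀ s t : ℝ, 0 < s → s ≤ t → φ x s / s ≤ L * (φ x t / t))
    (haincp : ∀ x ∈ Ω, ∀ s t : ℝ, 0 < s → s ≤ t →
      φ x s / s ^ p ≤ L * (φ x t / t ^ p))
    (β₀ : ℝ) (hβ₀ : 0 < β₀ ∧ β₀ ≤ 1)
    (hA0 : ∀ᵐ x ∂(volume.restrict Ω), β₀ ≤ phiInv φ x 1 ∧ phiInv φ x 1 ≤ 1 / β₀)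
    (ω : EuclideanSpace ℝ (Fin n) → ℝ) (hωmeas : Measurable ω)
    (hωpos : ∀ᵐ x ∂volume, 0 < ω x)
    (A : ℝ≥0∞) (hA : A ≠ ∞)
    (hAp : ∀ (z : EuclideanSpace ℝ (Fin n)) (r : ℝ), 0 < r →
      ((∫⁻ y in ball z r, ENNReal.ofReal (ω y)) / volume (ball z r)) *
        ((∫⁻ y in ball z r, ENNReal.ofReal (ω y ^ (-(1 : ℝ) / (p - 1)))) /
          volume (ball z r)) ^ (p - 1) ≤ A)
    (f : EuclideanSpace ℝ (Fin n) → ℝ) (hf : Measurable f)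
    (hfψ : ∃ lam : ℝ, 0 < lam ∧
      ∫⁻ x in Ω, ENNReal.ofReal (φ x (|f x| / lam) * ω x) ≤ 1) :
    LocallyIntegrableOn f Ω volume :=
  stmt_7_general n p L hp hL Ω hΩo φ hφnonneg hφmono hφtop haincp β₀ hβ₀ hA0 ω hωmeas hωpos A hA hAp
    f hf hfψ
end

section
/- Let φ be a weak Φ-function on Ω satisfying (A0) with constant β_0 and (aDec)_q^∞ with constant L (i.e., t ↦ t^{-q}(φ(x,t)+1) is almost decreasing on (0,∞)). Then ψ(x,t) := φ(x,t) + t satisfies (aDec)_q with some constant L' depending only on L, q, β_0 (i.e., t ↦ t^{-q}ψ(x,t) is almost decreasing on (0,∞)). -/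
/-!
Write `ψ(t) = φ(t) + t` and fix `m = β₀ / 2`; by (A0), `φ(m) ≤ 1`. For `t ≤ m`, (aInc)₁ gives
`φ(t) ≤ (L / m) t`, so `ψ(t) / t^q` is comparable to `t^{1-q}`, which decreases. For `t ≥ m`, the
constant `1` in (aDec)_q^∞ is dominated by `t / m`, so (aDec)_q^∞ transfers to `ψ`. Both ranges give
the constant `L / m + 1`; chaining through `m` gives `(L / m + 1)²` on all of `(0, ∞)`.
-/

open MeasureTheory Filter Set

-- The paper's "almost decreasing with constant `C`", in terms of which (aDec) is phrased.
def AlmostAntitoneOn (C : ℝ) (f : ℝ → ℝ) (S : Set ℝ) : Prop :=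
  ∀ ⦃a b⦄, a ∈ S → b ∈ S → a ≤ b → f b ≤ C * f a

theorem AlmostAntitoneOn.Ioi_of_Ioc_of_Ici {C₁ C₂ a m : ℝ} {f : ℝ → ℝ} (hC₁ : 1 ≤ C₁)
    (hC₂ : 1 ≤ C₂) (ham : a < m) (hf : ∀ t ∈ Ioi a, 0 ≤ f t)
    (h₁ : AlmostAntitoneOn C₁ f (Ioc a m)) (h₂ : AlmostAntitoneOn C₂ f (Ici m)) :
    AlmostAntitoneOn (C₁ * C₂) f (Ioi a) := by
  intro s t hs ht hst
  have hfs := hf s hs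
  rcases le_total t m with htm | hmt
  · calc f t ≤ C₁ * f s := h₁ ⟨hs, hst.trans htm⟩ ⟨ht, htm⟩ hst
      _ ≤ C₁ * C₂ * f s := by nlinarith [mul_nonneg (zero_le_one.trans hC₁) hfs]
  rcases le_total m s with hms | hsm
  · calc f t ≤ C₂ * f s := h₂ hms hmt hst
      _ ≤ C₁ * C₂ * f s := by nlinarith [mul_nonneg (zero_le_one.trans hC₂) hfs]
  · calc f t ≤ C₂ * f m := h₂ (le_refl m) hmt hmt
      _ ≤ C₂ * (C₁ * f s) := by gcongr; exact h₁ ⟨hs, hsm⟩ ⟨ham, le_rfl⟩ hsm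
      _ = C₁ * C₂ * f s := by ring

theorem self_div_rpow_le_self_div_rpow {q s t : ℝ} (hq : 1 ≤ q) (hs : 0 < s) (hst : s ≤ t) :
    t / t ^ q ≤ s / s ^ q := by
  have key := Real.rpow_le_rpow_of_nonpos hs hst (sub_nonpos.mpr hq)
  rwa [Real.rpow_sub hs, Real.rpow_sub (hs.trans_le hst), Real.rpow_one, Real.rpow_one] at key

theorem lt_of_lt_phiInv {α : Type*} {φ : α → ℝ → ℝ} {x : α} {s τ : ℝ} (hτ : 0 ≤ τ)
    (h : τ < phiInv φ x s) : φ x τ < s := by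
  by_contra! hle
  exact h.not_ge (csInf_le ⟨0, fun _ hσ => hσ.1⟩ ⟨hτ, hle⟩)

section AddSelf

variable {g : ℝ → ℝ} {L q m : ℝ}

theorem almostAntitoneOn_Ioc_add_self_div_rpow (hL : 0 ≤ L) (hq : 1 ≤ q) (hm : 0 < m)
    (hg : ∀ t, 0 < t → 0 ≤ g t) (hgm : g m ≤ 1)
    (hinc : ∀ t, 0 < t → t ≤ m → g t / t ≤ L * (g m / m)) :
    AlmostAntitoneOn (L / m + 1) (fun t => (g t + t) / t ^ q) (Ioc 0 m) := by
  intro s t ⟨hs, _⟩ ⟨ht, htm⟩ hst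
  have hgt : g t ≤ L / m * t := by
    have : g t / t ≤ L / m := (hinc t ht htm).trans <| by
      rw [← mul_div_assoc]; gcongr; exact mul_le_of_le_one_right hL hgm
    rwa [div_le_iff₀ ht] at this
  have hC : 0 ≤ L / m + 1 := by positivity
  calc (g t + t) / t ^ q ≤ (L / m + 1) * (t / t ^ q) := by
        rw [← mul_div_assoc]; gcongr; linarith
    _ ≤ (L / m + 1) * (s / s ^ q) :=
        mul_le_mul_of_nonneg_left (self_div_rpow_le_self_div_rpow hq hs hst) hC
    _ ≤ (L / m + 1) * ((g s + s) / s ^ q) := by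
        gcongr; linarith [hg s hs]

theorem almostAntitoneOn_Ici_add_self_div_rpow (hL : 0 ≤ L) (hq : 1 ≤ q) (hm : 0 < m)
    (hm1 : m ≤ 1) (hg : ∀ t, 0 < t → 0 ≤ g t)
    (hdec : AlmostAntitoneOn L (fun t => (g t + 1) / t ^ q) (Ici m)) :
    AlmostAntitoneOn (L / m + 1) (fun t => (g t + t) / t ^ q) (Ici m) := by
  intro s t hs ht hst
  have hs0 : 0 < s := hm.trans_le hs
  have hgs := hg s hs0
  have hsq : 0 < s ^ q := Real.rpow_pos_of_pos hs0 q
  have htq : 0 < t ^ q := Real.rpow_pos_of_pos (hs0.trans_le hst) q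
  -- `1 ≤ s / m` on this range, so the `+ 1` of (aDec)_q^∞ costs only a factor `1 / m`
  have hone : g s + 1 ≤ (g s + s) / m := by
    rw [le_div_iff₀ hm]; nlinarith [mul_le_of_le_one_right hgs hm1, show m ≤ s from hs]
  have hφ : g t / t ^ q ≤ L / m * ((g s + s) / s ^ q) := calc
    g t / t ^ q ≤ (g t + 1) / t ^ q := by gcongr; linarith
    _ ≤ L * ((g s + 1) / s ^ q) := hdec hs ht hst
    _ ≤ L * ((g s + s) / m / s ^ q) := by gcongr
    _ = L / m * ((g s + s) / s ^ q) := by ring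
  have hid : t / t ^ q ≤ (g s + s) / s ^ q :=
    (self_div_rpow_le_self_div_rpow hq hs0 hst).trans (by gcongr; linarith)
  calc (g t + t) / t ^ q = g t / t ^ q + t / t ^ q := add_div _ _ _
    _ ≤ (L / m + 1) * ((g s + s) / s ^ q) := by linarith

end AddSelf

theorem stmt_10_general (n : ℕ) (L q : ℝ) (hL : 1 ≤ L) (hq : 1 < q)
    (Ω : Set (EuclideanSpace ℝ (Fin n))) (hΩm : MeasurableSet Ω)
    (φ : EuclideanSpace ℝ (Fin n) → ℝ → ℝ)
    (hφnonneg : ∀ x ∈ Ω, ∀ t : ℝ, 0 ≤ t → 0 ≤ φ x t)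
    (hainc1 : ∀ x ∈ Ω, ∀ s t : ℝ, 0 < s → s ≤ t → φ x s / s ≤ L * (φ x t / t))
    (β₀ : ℝ) (hβ₀ : 0 < β₀ ∧ β₀ ≤ 1)
    (hA0 : ∀ᵐ x ∂(volume.restrict Ω), β₀ ≤ phiInv φ x 1 ∧ phiInv φ x 1 ≤ 1 / β₀)
    (hadecinf : ∀ x ∈ Ω, ∀ s t : ℝ, 0 < s → s ≤ t →
      (φ x t + 1) / t ^ q ≤ L * ((φ x s + 1) / s ^ q)) :
    ∃ L' : ℝ, 0 < L' ∧
      ∀ᵐ x ∂(volume.restrict Ω), ∀ s t : ℝ, 0 < s → s ≤ t →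
        (φ x t + t) / t ^ q ≤ L' * ((φ x s + s) / s ^ q) := by
  obtain ⟨hβ₀pos, hβ₀le⟩ := hβ₀
  set m := β₀ / 2 with hm_def
  have hm : 0 < m := by positivity
  have hL0 : 0 ≤ L := by linarith
  have hC : 1 ≤ L / m + 1 := le_add_of_nonneg_left (by positivity)
  refine ⟨(L / m + 1) * (L / m + 1), by positivity, ?_⟩
  filter_upwards [ae_restrict_mem hΩm, hA0] with x hx hA0x
  have hg : ∀ t, 0 < t → 0 ≤ φ x t := fun t ht => hφnonneg x hx t ht.le
  have hφm : φ x m ≤ 1 := (lt_of_lt_phiInv hm.le (by linarith [hA0x.1])).le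
  have key := AlmostAntitoneOn.Ioi_of_Ioc_of_Ici hC hC hm
    (fun t (ht : 0 < t) => div_nonneg (add_nonneg (hg t ht) ht.le) (Real.rpow_nonneg ht.le q))
    (almostAntitoneOn_Ioc_add_self_div_rpow hL0 hq.le hm hg hφm
      fun t ht htm => hainc1 x hx t m ht htm)
    (almostAntitoneOn_Ici_add_self_div_rpow hL0 hq.le hm (by linarith [hm_def]) hg
      fun s t hs _ hst => hadecinf x hx s t (hm.trans_le hs) hst)
  exact fun s t hs hst => key hs (hs.trans_le hst) hst

/-- If a weak Φ-function `φ` satisfies (A0) and (aDec)_q^∞, then `ψ(x,t) := φ(x,t) + t`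
satisfies (aDec)_q. -/
theorem stmt_10 (n : ℕ) (L q : ℝ) (hL : 1 ≤ L) (hq : 1 < q)
    (Ω : Set (EuclideanSpace ℝ (Fin n))) (hΩm : MeasurableSet Ω)
    (φ : EuclideanSpace ℝ (Fin n) → ℝ → ℝ)
    (hφmeas : Measurable (Function.uncurry φ))
    (hφnonneg : ∀ x ∈ Ω, ∀ t : ℝ, 0 ≤ t → 0 ≤ φ x t)
    (hφmono : ∀ x ∈ Ω, MonotoneOn (φ x) (Set.Ici 0))
    (hφ0 : ∀ x ∈ Ω, φ x 0 = 0)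
    (hφ0' : ∀ x ∈ Ω, Tendsto (φ x) (nhdsWithin 0 (Set.Ioi 0)) (nhds 0))
    (hφtop : ∀ x ∈ Ω, Tendsto (φ x) atTop atTop)
    (hainc1 : ∀ x ∈ Ω, ∀ s t : ℝ, 0 < s → s ≤ t → φ x s / s ≤ L * (φ x t / t))
    (β₀ : ℝ) (hβ₀ : 0 < β₀ ∧ β₀ ≤ 1)
    (hA0 : ∀ᵐ x ∂(volume.restrict Ω), β₀ ≤ phiInv φ x 1 ∧ phiInv φ x 1 ≤ 1 / β₀)
    (hadecinf : ∀ x ∈ Ω, ∀ s t : ℝ, 0 < s → s ≤ t →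
      (φ x t + 1) / t ^ q ≤ L * ((φ x s + 1) / s ^ q)) :
    ∃ L' : ℝ, 0 < L' ∧
      ∀ᵐ x ∂(volume.restrict Ω), ∀ s t : ℝ, 0 < s → s ≤ t →
        (φ x t + t) / t ^ q ≤ L' * ((φ x s + s) / s ^ q) :=
  stmt_10_general n L q hL hq Ω hΩm φ hφnonneg hainc1 β₀ hβ₀ hA0 hadecinf
end

section
/- Let Ω ⊂ ℝ^n be bounded, ω a weight with ω(Ω) < ∞, and φ a weak Φ-function on Ω satisfying (aInc)_1 with uniform constant L. If φ satisfies (A1)_ω with constant β_1, then φ satisfies (A1')_ω with a constant β̂_1 depending only on β_1 and L: φ(x, β̂_1 t) ≤ φ(y,t) + 1 whenever φ(y,t) ∈ [1, 1/ω(B)], for a.e. x,y ∈ B ∩ Ω and every ball B with ω(B) ≤ 1. -/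
/-! Fix `y`, `t` with `s = φ(y,t) ∈ [1, 1/ω(B)]` and put `a = φ⁻¹(y,s) ≤ t`. For every `τ ∈ (a, t]`
we have `φ(y,τ) ≥ s`, so `(aInc)₁` gives `s/τ ≤ L s/t`, i.e. `t ≤ Lτ`; hence `t ≤ L a`.
Applying `(A1)_ω` at level `s` with the roles of `x` and `y` exchanged gives
`β₁ t / L ≤ β₁ a ≤ φ⁻¹(x,s)`; as `β₁ t/(2L)` lies strictly below `φ⁻¹(x,s)`,
`φ(x, β₁ t/(2L)) < s`. -/

open MeasureTheory Metric Filter Set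

section PhiInv

variable {α : Type*} {φ : α → ℝ → ℝ} {x : α} {s t τ : ℝ}

lemma phiInv_nonneg : 0 ≤ phiInv φ x s :=
  Real.sInf_nonneg fun _ hτ => hτ.1

lemma phiInv_le (hτ : 0 ≤ τ) (hs : s ≤ φ x τ) : phiInv φ x s ≤ τ :=
  csInf_le ⟨0, fun _ hτ' => hτ'.1⟩ ⟨hτ, hs⟩

lemma apply_lt_of_lt_phiInv (hτ : 0 ≤ τ) (h : τ < phiInv φ x s) : φ x τ < s := by
  by_contra! hs
  exact (phiInv_le hτ hs).not_gt h

lemma le_apply_of_phiInv_lt_s11 (hmono : MonotoneOn (φ x) (Ici 0)) (ht : 0 ≤ t) (hst : s ≤ φ x t)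
    (h : phiInv φ x s < τ) : s ≤ φ x τ := by
  obtain ⟨τ', ⟨hτ'0, hsτ'⟩, hτ'τ⟩ :=
    exists_lt_of_csInf_lt (s := {τ | 0 ≤ τ ∧ s ≤ φ x τ}) ⟨t, ht, hst⟩ h
  exact hsτ'.trans (hmono hτ'0 (hτ'0.trans hτ'τ.le) hτ'τ.le)

lemma le_mul_phiInv_apply {L : ℝ} (hL : 1 ≤ L) (hmono : MonotoneOn (φ x) (Ici 0))
    (hainc : ∀ s t : ℝ, 0 < s → s ≤ t → φ x s / s ≤ L * (φ x t / t))
    (ht : 0 ≤ t) (hpos : 0 < φ x t) : t ≤ L * phiInv φ x (φ x t) := by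
  set a := phiInv φ x (φ x t)
  have hL0 : 0 < L := zero_lt_one.trans_le hL
  by_contra! hat
  obtain ⟨τ, haτ, hτt⟩ := exists_between ((lt_div_iff₀' hL0).2 hat)
  have hτ0 : 0 < τ := phiInv_nonneg.trans_lt haτ
  have ht0 : 0 < t := (mul_nonneg hL0.le phiInv_nonneg).trans_lt hat
  have hτ_le : τ ≤ t := hτt.le.trans (div_le_self ht0.le hL)
  have hφτ : φ x t ≤ φ x τ := le_apply_of_phiInv_lt_s11 hmono ht le_rfl haτ
  have hratio : φ x t / τ ≤ L * φ x t / t := by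
    rw [mul_div_assoc]
    exact (div_le_div_of_nonneg_right hφτ hτ0.le).trans (hainc τ t hτ0 hτ_le)
  rw [div_le_div_iff₀ hτ0 ht0] at hratio
  have : t ≤ L * τ := le_of_mul_le_mul_left (by linarith) hpos
  linarith [(lt_div_iff₀' hL0).1 hτt]

end PhiInv

theorem stmt_11_general (n : ℕ) (L β₁ : ℝ) (hL : 1 ≤ L) (hβ₁ : 0 < β₁ ∧ β₁ ≤ 1)
    (Ω : Set (EuclideanSpace ℝ (Fin n)))
    (ω : EuclideanSpace ℝ (Fin n) → ℝ)
    (φ : EuclideanSpace ℝ (Fin n) → ℝ → ℝ)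
    (hφmono : ∀ x ∈ Ω, MonotoneOn (φ x) (Set.Ici 0))
    (hφ0 : ∀ x ∈ Ω, φ x 0 = 0)
    (hainc1 : ∀ x ∈ Ω, ∀ s t : ℝ, 0 < s → s ≤ t → φ x s / s ≤ L * (φ x t / t))
    (hA1 : ∀ (z : EuclideanSpace ℝ (Fin n)) (r : ℝ), 0 < r →
      (∫ y in ball z r, ω y) ≤ 1 →
      ∃ N : Set (EuclideanSpace ℝ (Fin n)), volume N = 0 ∧
        ∀ x ∈ (ball z r ∩ Ω) \ N, ∀ y ∈ (ball z r ∩ Ω) \ N,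
          ∀ t : ℝ, 1 ≤ t → t ≤ 1 / ∫ y' in ball z r, ω y' →
            β₁ * phiInv φ x t ≤ phiInv φ y t) :
    ∃ βhat : ℝ, 0 < βhat ∧ βhat ≤ 1 ∧
      ∀ (z : EuclideanSpace ℝ (Fin n)) (r : ℝ), 0 < r →
        (∫ y in ball z r, ω y) ≤ 1 →
        ∃ N : Set (EuclideanSpace ℝ (Fin n)), volume N = 0 ∧
          ∀ x ∈ (ball z r ∩ Ω) \ N, ∀ y ∈ (ball z r ∩ Ω) \ N,
            ∀ t : ℝ, 0 ≤ t → 1 ≤ φ y t → φ y t ≤ 1 / ∫ y' in ball z r, ω y' →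
              φ x (βhat * t) ≤ φ y t + 1 := by
  obtain ⟨hβ₁0, hβ₁1⟩ := hβ₁
  have hL0 : 0 < L := zero_lt_one.trans_le hL
  refine ⟨β₁ / (2 * L), by positivity, (div_le_one (by positivity)).2 (by linarith), ?_⟩
  intro z r hr hB
  obtain ⟨N, hN0, hN⟩ := hA1 z r hr hB
  refine ⟨N, hN0, fun x hx y hy t ht hs1 hsB => ?_⟩
  have hyΩ : y ∈ Ω := hy.1.2
  have ht0 : 0 < t := ht.lt_of_ne <| by rintro rfl; linarith [hφ0 y hyΩ]
  have hLa := le_mul_phiInv_apply hL (hφmono y hyΩ) (hainc1 y hyΩ) ht (by linarith)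
  have hswap := hN y hy x hx (φ y t) hs1 hsB
  have hlt : β₁ / (2 * L) * t < phiInv φ x (φ y t) :=
    calc β₁ / (2 * L) * t < β₁ * (t / L) := by
          rw [show β₁ / (2 * L) * t = β₁ * (t / L) / 2 by ring]
          exact half_lt_self (by positivity)
      _ ≤ β₁ * phiInv φ y (φ y t) := by gcongr; exact (div_le_iff₀' hL0).2 hLa
      _ ≤ phiInv φ x (φ y t) := hswap
  linarith [apply_lt_of_lt_phiInv (by positivity) hlt]

/-- On a bounded domain, (A1)_ω implies (A1')_ω (in the weaker form with `+1`). -/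
theorem stmt_11 (n : ℕ) (L β₁ : ℝ) (hL : 1 ≤ L) (hβ₁ : 0 < β₁ ∧ β₁ ≤ 1)
    (Ω : Set (EuclideanSpace ℝ (Fin n))) (hΩb : Bornology.IsBounded Ω) (hΩm : MeasurableSet Ω)
    (ω : EuclideanSpace ℝ (Fin n) → ℝ) (hωnonneg : ∀ x, 0 ≤ ω x)
    (hωloc : LocallyIntegrable ω) (hωΩ : IntegrableOn ω Ω)
    (φ : EuclideanSpace ℝ (Fin n) → ℝ → ℝ)
    (hφnonneg : ∀ x ∈ Ω, ∀ t : ℝ, 0 ≤ t → 0 ≤ φ x t)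
    (hφmono : ∀ x ∈ Ω, MonotoneOn (φ x) (Set.Ici 0))
    (hφ0 : ∀ x ∈ Ω, φ x 0 = 0)
    (hφ0' : ∀ x ∈ Ω, Tendsto (φ x) (nhdsWithin 0 (Set.Ioi 0)) (nhds 0))
    (hφtop : ∀ x ∈ Ω, Tendsto (φ x) atTop atTop)
    (hainc1 : ∀ x ∈ Ω, ∀ s t : ℝ, 0 < s → s ≤ t → φ x s / s ≤ L * (φ x t / t))
    (hA1 : ∀ (z : EuclideanSpace ℝ (Fin n)) (r : ℝ), 0 < r →
      (∫ y in ball z r, ω y) ≤ 1 →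
      ∃ N : Set (EuclideanSpace ℝ (Fin n)), volume N = 0 ∧
        ∀ x ∈ (ball z r ∩ Ω) \ N, ∀ y ∈ (ball z r ∩ Ω) \ N,
          ∀ t : ℝ, 1 ≤ t → t ≤ 1 / ∫ y' in ball z r, ω y' →
            β₁ * phiInv φ x t ≤ phiInv φ y t) :
    ∃ βhat : ℝ, 0 < βhat ∧ βhat ≤ 1 ∧
      ∀ (z : EuclideanSpace ℝ (Fin n)) (r : ℝ), 0 < r →
        (∫ y in ball z r, ω y) ≤ 1 →
        ∃ N : Set (EuclideanSpace ℝ (Fin n)), volume N = 0 ∧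
          ∀ x ∈ (ball z r ∩ Ω) \ N, ∀ y ∈ (ball z r ∩ Ω) \ N,
            ∀ t : ℝ, 0 ≤ t → 1 ≤ φ y t → φ y t ≤ 1 / ∫ y' in ball z r, ω y' →
              φ x (βhat * t) ≤ φ y t + 1 :=
  stmt_11_general n L β₁ hL hβ₁ Ω ω φ hφmono hφ0 hainc1 hA1
end

section
/- Let φ : [0,∞) → [0,∞) be increasing, satisfy (aInc)_1 with constant L and (aDec)_q with constant L for some q ≥ 1, and φ(0)=0. Then for any σ-finite measure μ, any set E with 0 < μ(E) < ∞, and any f ∈ L^1(E,μ): φ( (1/μ(E)) ∫_E |f| dμ ) ≤ C (1/μ(E)) ∫_E φ(|f|) dμ, where C depends only on L. -/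
/-!
Let `m` be the mean of `|f|` over `E`. By (aInc)₁ the line of slope `φ (m/2) / (L m/2)` through
`(m/2, 0)` lies below `φ` on `[0, ∞)`; integrating it over `E` gives `φ (m/2) / L ≤ ⨍_E φ |f|`.
By (aDec)_q, `φ m ≤ L 2^q φ (m/2)`, so the inequality holds with `C = L² 2^q`.
-/

open MeasureTheory ENNReal

theorem ofReal_integral_le_lintegral_ofReal {α : Type*} [MeasurableSpace α] {μ : Measure α}
    {g : α → ℝ} (hg : Integrable g μ) :
    ENNReal.ofReal (∫ x, g x ∂μ) ≤ ∫⁻ x, ENNReal.ofReal (g x) ∂μ := by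
  apply ENNReal.ofReal_le_of_le_toReal
  rw [integral_eq_lintegral_pos_part_sub_lintegral_neg_part hg]
  exact sub_le_self _ toReal_nonneg

section GrowthConditions

variable {φ : ℝ → ℝ} {L : ℝ}

theorem mul_sub_le_of_aInc (hφnonneg : ∀ t, 0 ≤ t → 0 ≤ φ t) (hL : 0 < L)
    (hainc : ∀ s t : ℝ, 0 < s → s ≤ t → φ s / s ≤ L * (φ t / t))
    {s t : ℝ} (hs : 0 < s) (ht : 0 ≤ t) :
    φ s / (L * s) * (t - s) ≤ φ t := by
  have hslope : 0 ≤ φ s / (L * s) := div_nonneg (hφnonneg s hs.le) (by positivity)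
  rcases lt_or_ge t s with hts | hst
  · exact (mul_nonpos_of_nonneg_of_nonpos hslope (by linarith)).trans (hφnonneg t ht)
  · have htpos : 0 < t := hs.trans_le hst
    calc φ s / (L * s) * (t - s) ≤ φ s / s / L * t := by
          rw [div_div, mul_comm s L]; gcongr; linarith
      _ ≤ L * (φ t / t) / L * t := by gcongr; exact hainc s t hs hst
      _ = φ t := by field_simp

theorem le_mul_rpow_of_aDec {q : ℝ}
    (hadec : ∀ s t : ℝ, 0 < s → s ≤ t → φ t / t ^ q ≤ L * (φ s / s ^ q))
    {s c : ℝ} (hs : 0 < s) (hc : 1 ≤ c) :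
    φ (c * s) ≤ L * c ^ q * φ s := by
  have hcs : 0 < c * s := by positivity
  have h := hadec s (c * s) hs (le_mul_of_one_le_left hs.le hc)
  rw [div_le_iff₀ (Real.rpow_pos_of_pos hcs q), Real.mul_rpow (by linarith) hs.le] at h
  calc φ (c * s) ≤ L * (φ s / s ^ q) * (c ^ q * s ^ q) := h
    _ = L * c ^ q * φ s := by field_simp [(Real.rpow_pos_of_pos hs q).ne']

theorem ofReal_mul_sub_le_lintegral_of_aInc {α : Type*} [MeasurableSpace α] {μ : Measure α}
    [IsFiniteMeasure μ] (hφnonneg : ∀ t, 0 ≤ t → 0 ≤ φ t) (hL : 0 < L)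
    (hainc : ∀ s t : ℝ, 0 < s → s ≤ t → φ s / s ≤ L * (φ t / t))
    {f : α → ℝ} (hf : Integrable f μ) {s : ℝ} (hs : 0 < s) :
    ENNReal.ofReal (φ s / (L * s) * (∫ x, |f x| ∂μ - s * μ.real Set.univ)) ≤
      ∫⁻ x, ENNReal.ofReal (φ |f x|) ∂μ := by
  have hline : Integrable (fun x ↦ φ s / (L * s) * (|f x| - s)) μ :=
    (hf.abs.sub (integrable_const s)).const_mul _
  calc ENNReal.ofReal (φ s / (L * s) * (∫ x, |f x| ∂μ - s * μ.real Set.univ))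
      = ENNReal.ofReal (∫ x, φ s / (L * s) * (|f x| - s) ∂μ) := by
        rw [integral_const_mul, integral_sub hf.abs (integrable_const s), integral_const,
          smul_eq_mul, mul_comm s]
    _ ≤ ∫⁻ x, ENNReal.ofReal (φ s / (L * s) * (|f x| - s)) ∂μ :=
        ofReal_integral_le_lintegral_ofReal hline
    _ ≤ ∫⁻ x, ENNReal.ofReal (φ |f x|) ∂μ :=
        lintegral_mono fun x ↦ ENNReal.ofReal_le_ofReal
          (mul_sub_le_of_aInc hφnonneg hL hainc hs (abs_nonneg _))

end GrowthConditions

theorem stmt_16_general (q L : ℝ) (hL : 1 ≤ L)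
    (φ : ℝ → ℝ) (hφnonneg : ∀ t, 0 ≤ t → 0 ≤ φ t)
    (hφ0 : φ 0 = 0)
    (hainc1 : ∀ s t : ℝ, 0 < s → s ≤ t → φ s / s ≤ L * (φ t / t))
    (hadec : ∀ s t : ℝ, 0 < s → s ≤ t → φ t / t ^ q ≤ L * (φ s / s ^ q)) :
    ∃ C : ℝ, 0 < C ∧
      ∀ (α : Type) (inst : MeasurableSpace α) (μ : Measure α), SigmaFinite μ →
        ∀ E : Set α, MeasurableSet E → 0 < μ E → μ E < ∞ →
          ∀ f : α → ℝ, IntegrableOn f E μ →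
            ENNReal.ofReal (φ ((μ E).toReal⁻¹ * ∫ x in E, |f x| ∂μ)) ≤
              ENNReal.ofReal C *
                ((∫⁻ x in E, ENNReal.ofReal (φ |f x|) ∂μ) / μ E) := by
  have hL0 : 0 < L := by linarith
  refine ⟨L ^ 2 * 2 ^ q, by positivity, fun α _ μ _ E _ hE0 hEfin f hf ↦ ?_⟩
  have : IsFiniteMeasure (μ.restrict E) := isFiniteMeasure_restrict.mpr hEfin.ne
  have hμE : 0 < (μ E).toReal := toReal_pos hE0.ne' hEfin.ne
  set m := (μ E).toReal⁻¹ * ∫ x in E, |f x| ∂μ with hm_def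
  have hm : 0 ≤ m := by positivity
  rcases hm.eq_or_lt with hm0 | hmpos
  · simp [← hm0, hφ0]
  have hlower : ENNReal.ofReal (φ (m / 2) / L * (μ E).toReal) ≤
      ∫⁻ x in E, ENNReal.ofReal (φ |f x|) ∂μ := by
    have hI : ∫ x in E, |f x| ∂μ = m * (μ E).toReal := by
      rw [hm_def]; field_simp
    convert ofReal_mul_sub_le_lintegral_of_aInc hφnonneg hL0 hainc1 hf (half_pos hmpos) using 2
    rw [measureReal_restrict_apply_univ, measureReal_def, hI]
    field_simp
    ring
  have hupper : φ m ≤ L * 2 ^ q * φ (m / 2) := by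
    calc φ m = φ (2 * (m / 2)) := by ring_nf
      _ ≤ L * 2 ^ q * φ (m / 2) := le_mul_rpow_of_aDec hadec (half_pos hmpos) one_le_two
  rw [← mul_div_assoc, ENNReal.le_div_iff_mul_le (.inl hE0.ne') (.inl hEfin.ne)]
  calc ENNReal.ofReal (φ m) * μ E = ENNReal.ofReal (φ m * (μ E).toReal) := by
        rw [ENNReal.ofReal_mul (hφnonneg m hm), ofReal_toReal hEfin.ne]
    _ ≤ ENNReal.ofReal (L ^ 2 * 2 ^ q * (φ (m / 2) / L * (μ E).toReal)) := by
        apply ENNReal.ofReal_le_ofReal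
        calc φ m * (μ E).toReal ≤ L * 2 ^ q * φ (m / 2) * (μ E).toReal := by gcongr
          _ = L ^ 2 * 2 ^ q * (φ (m / 2) / L * (μ E).toReal) := by field_simp
    _ = ENNReal.ofReal (L ^ 2 * 2 ^ q) * ENNReal.ofReal (φ (m / 2) / L * (μ E).toReal) :=
        ENNReal.ofReal_mul (by positivity)
    _ ≤ _ := by gcongr

/-- Jensen-type inequality with constant for functions satisfying (aInc)₁ and (aDec)_q. -/
theorem stmt_16 (q L : ℝ) (hq : 1 ≤ q) (hL : 1 ≤ L)
    (φ : ℝ → ℝ) (hφnonneg : ∀ t, 0 ≤ t → 0 ≤ φ t)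
    (hφmono : MonotoneOn φ (Set.Ici 0)) (hφ0 : φ 0 = 0)
    (hainc1 : ∀ s t : ℝ, 0 < s → s ≤ t → φ s / s ≤ L * (φ t / t))
    (hadec : ∀ s t : ℝ, 0 < s → s ≤ t → φ t / t ^ q ≤ L * (φ s / s ^ q)) :
    ∃ C : ℝ, 0 < C ∧
      ∀ (α : Type) (inst : MeasurableSpace α) (μ : Measure α), SigmaFinite μ →
        ∀ E : Set α, MeasurableSet E → 0 < μ E → μ E < ∞ →
          ∀ f : α → ℝ, IntegrableOn f E μ →
            ENNReal.ofReal (φ ((μ E).toReal⁻¹ * ∫ x in E, |f x| ∂μ)) ≤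
              ENNReal.ofReal C *
                ((∫⁻ x in E, ENNReal.ofReal (φ |f x|) ∂μ) / μ E) :=
  stmt_16_general q L hL φ hφnonneg hφ0 hainc1 hadec
end
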